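/- arXiv:2312.13047 — 7 statements merged into one kernel-verified Lean document; each statement's English description precedes it below -/
import Mathlib

section
/- If (X,d) is a compact metric space, then for every integer n > 0 the family 𝓑_n is a base for components of X. -/
/-- `B*(Y,ε)`: the interior of `Y` together with the `ε`-ball around `Y \ int Y`. -/
def Bstar {X : Type*} [MetricSpace X] (Y : Set X) (ε : ℝ) : Set X :=
  interior Y ∪ Metric.thickening ε (Y \ interior Y)

/-- The family `𝓑ₙ` of clopen sets `V` for which some connected component `S`
satisfies `S ⊆ V ⊆ B*(S, 1/n)`. -/
def BFam (X : Type*) [MetricSpace X] (n : ℕ) : Set (Set X) :=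
  {V | IsClopen V ∧ ∃ x : X,
    connectedComponent x ⊆ V ∧ V ⊆ Bstar (connectedComponent x) (1 / n)}

/-- A family is a base for components when every connected component is the
intersection of a subfamily. -/
def IsBaseForComponents {X : Type*} [TopologicalSpace X] (𝓑 : Set (Set X)) : Prop :=
  ∀ x : X, ∃ 𝓥 ⊆ 𝓑, connectedComponent x = ⋂₀ 𝓥

open Set

/-- In a compact T2 space, any open set containing a connected component contains
a clopen set containing that component. -/
lemma exists_isClopen_between {X : Type*} [TopologicalSpace X] [T2Space X] [CompactSpace X]
    {x : X} {U : Set X} (hU : IsOpen U) (hsub : connectedComponent x ⊆ U) :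
    ∃ V : Set X, IsClopen V ∧ connectedComponent x ⊆ V ∧ V ⊆ U := by
  have H1 := hU.isClosed_compl.isCompact.inter_iInter_nonempty
    (fun s : { s : Set X // IsClopen s ∧ x ∈ s } => s) fun s => s.2.1.1
  rw [← not_disjoint_iff_nonempty_inter, imp_not_comm, not_forall] at H1
  have hdisj : Disjoint Uᶜ (⋂ s : { s : Set X // IsClopen s ∧ x ∈ s }, ↑s) := by
    rw [disjoint_compl_left_iff_subset]
    calc (⋂ s : { s : Set X // IsClopen s ∧ x ∈ s }, (s : Set X))
        = connectedComponent x := (connectedComponent_eq_iInter_isClopen x).symm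
      _ ⊆ U := hsub
  obtain ⟨si, H2⟩ := H1 hdisj
  refine ⟨⋂ s ∈ si, Subtype.val s, isClopen_biInter_finset fun s _ => s.2.1, ?_, ?_⟩
  · exact subset_iInter₂ fun s _ =>
      connectedComponent_subset_iInter_isClopen.trans (iInter_subset _ s)
  · rwa [← disjoint_compl_left_iff_subset, disjoint_iff_inter_eq_empty,
      ← not_nonempty_iff_eq_empty]

/-- In a compact metric space, `𝓑ₙ` is a base for components for every `n > 0`. -/
theorem BFam_isBaseForComponents {X : Type*} [MetricSpace X] [CompactSpace X]
    (n : ℕ) (hn : 0 < n) : IsBaseForComponents (BFam X n) := by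
  intro x
  set S := connectedComponent x with hS
  have hεpos : (0 : ℝ) < 1 / n := by positivity
  have hSB : S ⊆ Bstar S (1 / n) := by
    intro s hs
    by_cases h : s ∈ interior S
    · exact Or.inl h
    · exact Or.inr (Metric.self_subset_thickening hεpos _ ⟨hs, h⟩)
  have hBopen : IsOpen (Bstar S (1 / n)) :=
    isOpen_interior.union Metric.isOpen_thickening
  refine ⟨{V | IsClopen V ∧ S ⊆ V ∧ V ⊆ Bstar S (1 / n)}, ?_, ?_⟩
  · rintro V ⟨hV, hSV, hVB⟩
    exact ⟨hV, x, hSV, hVB⟩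
  · apply Set.Subset.antisymm
    · intro y hy
      rw [mem_sInter]
      rintro V ⟨_, hSV, _⟩
      exact hSV hy
    · intro y hy
      rw [hS, connectedComponent_eq_iInter_isClopen, mem_iInter]
      rintro ⟨Z, hZ, hxZ⟩
      have hSZ : S ⊆ Z := by
        rw [hS, connectedComponent_eq_iInter_isClopen]
        exact iInter_subset (fun s : { s : Set X // IsClopen s ∧ x ∈ s } => (s : Set X)) ⟨Z, hZ, hxZ⟩
      obtain ⟨V, hV, hSV, hVU⟩ := exists_isClopen_between (hZ.2.inter hBopen)
        (subset_inter hSZ hSB)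
      have hyV : y ∈ V := hy V ⟨hV, hSV, hVU.trans inter_subset_right⟩
      exact (hVU hyV).1
end

section
/- Let (X,d) be a compact metric space. Suppose that for each integer n > 0, 𝓟_n is a cover of X consisting of clopen sets such that 𝓟_n refines 𝓑_n (every member of 𝓟_n is contained in some member of 𝓑_n). Then the union ⋃_{n>0} 𝓟_n is a base for components of X. -/
/-- Key step: `Bstar S ε ⊆ U` when `S ⊆ U` and the `ε`-thickening of `U` stays in `U`. -/
lemma Bstar_subset {X : Type*} [MetricSpace X] {S U : Set X} {ε : ℝ}
    (hS : S ⊆ U) (hU : Metric.thickening ε U ⊆ U) : Bstar S ε ⊆ U := by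
  apply Set.union_subset
  · exact interior_subset.trans hS
  · exact (Metric.thickening_subset_of_subset ε ((Set.diff_subset).trans hS)).trans hU

/-- If each `𝓟ₙ` (n > 0) is a clopen cover refining `𝓑ₙ`, then `⋃_{n>0} 𝓟ₙ`
is a base for components. -/
theorem union_covers_isBaseForComponents {X : Type*} [MetricSpace X] [CompactSpace X]
    (𝓟 : ℕ → Set (Set X))
    (hclopen : ∀ n, 0 < n → ∀ V ∈ 𝓟 n, IsClopen V)
    (hcover : ∀ n, 0 < n → ⋃₀ 𝓟 n = Set.univ)
    (href : ∀ n, 0 < n → ∀ V ∈ 𝓟 n, ∃ W ∈ BFam X n, V ⊆ W) :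
    IsBaseForComponents (⋃ n ∈ {n : ℕ | 0 < n}, 𝓟 n) := by
  intro x
  refine ⟨{V | (∃ n, 0 < n ∧ V ∈ 𝓟 n) ∧ x ∈ V}, ?_, ?_⟩
  · rintro V ⟨⟨n, hn, hV⟩, -⟩
    exact Set.mem_biUnion hn hV
  · apply Set.Subset.antisymm
    · -- component ⊆ each clopen set containing x
      intro z hz V hV
      obtain ⟨⟨n, hn, hVn⟩, hxV⟩ := hV
      exact (hclopen n hn V hVn).connectedComponent_subset hxV hz
    · intro z hz
      rw [connectedComponent_eq_iInter_isClopen x, Set.mem_iInter]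
      rintro ⟨U, hUclopen, hxU⟩
      by_contra hzU
      -- get thickening margins for U and Uᶜ
      obtain ⟨δ, hδ, hδU⟩ := (hUclopen.isClosed.isCompact).exists_thickening_subset_open
        hUclopen.isOpen Set.Subset.rfl
      obtain ⟨δ', hδ', hδ'U⟩ := (hUclopen.compl.isClosed.isCompact).exists_thickening_subset_open
        hUclopen.compl.isOpen Set.Subset.rfl
      obtain ⟨n, hn⟩ := exists_nat_one_div_lt (lt_min hδ hδ' : (0:ℝ) < min δ δ')
      have hnpos : 0 < n + 1 := Nat.succ_pos n
      -- V ∈ 𝓟 (n+1) containing x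
      have hxmem : x ∈ ⋃₀ 𝓟 (n + 1) := by rw [hcover (n+1) hnpos]; trivial
      obtain ⟨V, hV, hxV⟩ := hxmem
      have hzV : z ∈ V := hz V (by exact ⟨⟨n + 1, hnpos, hV⟩, hxV⟩)
      obtain ⟨W, hWmem, hVW⟩ := href (n+1) hnpos V hV
      simp only [BFam, Set.mem_setOf_eq] at hWmem
      obtain ⟨hWclopen, y, hSW, hWB⟩ := hWmem
      have h1n : (1 : ℝ) / (n + 1 : ℕ) ≤ min δ δ' := by
        push_cast
        exact le_of_lt hn
      by_cases hyU : y ∈ U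
      · -- component of y inside U, so W ⊆ Bstar ⊆ U, so z ∈ U, contradiction
        have hSU : connectedComponent y ⊆ U := hUclopen.connectedComponent_subset hyU
        have : Bstar (connectedComponent y) (1 / (n + 1 : ℕ)) ⊆ U :=
          Bstar_subset hSU ((Metric.thickening_mono (h1n.trans (min_le_left _ _)) U).trans hδU)
        exact hzU (this (hWB (hVW hzV)))
      · have hSU : connectedComponent y ⊆ Uᶜ := hUclopen.compl.connectedComponent_subset hyU
        have : Bstar (connectedComponent y) (1 / (n + 1 : ℕ)) ⊆ Uᶜ :=
          Bstar_subset hSU ((Metric.thickening_mono (h1n.trans (min_le_right _ _)) Uᶜ).trans hδ'U)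
        exact this (hWB (hVW hxV)) hxU
end

section
/- In every nonempty compact metric space (X,d) there exists a sequence (𝓟_n)_{n≥1} of finite partitions of X into nonempty clopen sets such that for each n the partition 𝓟_n refines 𝓑_n (every member of 𝓟_n is contained in some member of 𝓑_n) and 𝓟_{n+1} refines 𝓟_n. Moreover, if X satisfies condition (⋆), then the partitions can be chosen so that 𝓟_n ⊆ 𝓑_n for every n. -/
/-- Condition (⋆). -/
def SatisfiesStar (X : Type*) [TopologicalSpace X] : Prop :=
  ∀ x : X, (connectedComponent x).Nontrivial →
    ∃ h : ↥(Set.Icc (0:ℝ) 1) ≃ₜ ↥(connectedComponent x),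
      IsOpen (connectedComponent x \
        {((h ⟨0, by norm_num⟩ : ↥(connectedComponent x)) : X),
         ((h ⟨1, by norm_num⟩ : ↥(connectedComponent x)) : X)})

/-!
Components of a compact metric space are quasi-components, so each component `C` has clopen
neighbourhoods inside every open neighbourhood, e.g. inside `B*(C, ε)`. Hence `𝓑ₙ` covers `X`,
and by compactness every clopen set splits into finitely many clopen pieces, each inside a member
of `𝓑ₙ`; splitting every piece of `𝓟ₙ` in this way gives `𝓟ₙ₊₁`.

Under (⋆) take the pieces inside `B*(C, δ)` with `8δ ≤ 1/n`. A piece meeting `C` contains it and is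
in `𝓑ₙ`. A piece missing `C` lies in the `δ`-neighbourhood of the at most two endpoints of `C`, so
each component inside it lies in a ball of radius `4δ`, and the piece splits further into clopen
sets inside such balls. Such a small set is either a finite union of open components, each of them
in `𝓑ₙ`, or it contains a component `C'` that is not open, and then it lies within `1/n` of any
point of `C' \ int C'`, so it is itself in `𝓑ₙ`.
-/

open Set Metric

section ClopenPartition

variable {X : Type*} [TopologicalSpace X]

structure IsClopenPartition (𝒬 : Set (Set X)) (W : Set X) : Prop where
  finite : 𝒬.Finite
  nonempty : ∀ P ∈ 𝒬, P.Nonempty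
  isClopen : ∀ P ∈ 𝒬, IsClopen P
  pairwiseDisjoint : 𝒬.PairwiseDisjoint id
  sUnion_eq : ⋃₀ 𝒬 = W

namespace IsClopenPartition

variable {𝒜 𝒬 𝒬' : Set (Set X)} {W W' : Set X}

theorem subset_of_mem (h : IsClopenPartition 𝒬 W) {P : Set X} (hP : P ∈ 𝒬) : P ⊆ W :=
  h.sUnion_eq ▸ subset_sUnion_of_mem hP

theorem empty : IsClopenPartition (∅ : Set (Set X)) ∅ :=
  ⟨finite_empty, by simp, by simp, pairwiseDisjoint_empty, sUnion_empty⟩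

theorem singleton (hW : IsClopen W) (hne : W.Nonempty) : IsClopenPartition {W} W :=
  ⟨finite_singleton W, by simpa, by simpa, pairwiseDisjoint_singleton _ _, sUnion_singleton W⟩

theorem exists_subset_singleton (hW : IsClopen W) : ∃ 𝒬 ⊆ {W}, IsClopenPartition 𝒬 W := by
  rcases W.eq_empty_or_nonempty with rfl | hne
  · exact ⟨∅, empty_subset _, empty⟩
  · exact ⟨{W}, subset_rfl, singleton hW hne⟩

theorem union (h : IsClopenPartition 𝒬 W) (h' : IsClopenPartition 𝒬' W') (hd : Disjoint W W') :
    IsClopenPartition (𝒬 ∪ 𝒬') (W ∪ W') where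
  finite := h.finite.union h'.finite
  nonempty P hP := hP.elim (h.nonempty P) (h'.nonempty P)
  isClopen P hP := hP.elim (h.isClopen P) (h'.isClopen P)
  pairwiseDisjoint := h.pairwiseDisjoint.union h'.pairwiseDisjoint fun _ hP _ hP' _ =>
    hd.mono (h.subset_of_mem hP) (h'.subset_of_mem hP')
  sUnion_eq := by rw [sUnion_union, h.sUnion_eq, h'.sUnion_eq]

theorem exists_refinement (h : IsClopenPartition 𝒜 W) {p : Set X → Prop}
    (hp : ∀ P ∈ 𝒜, ∃ 𝒬, IsClopenPartition 𝒬 P ∧ ∀ Q ∈ 𝒬, p Q) :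
    ∃ 𝒬, IsClopenPartition 𝒬 W ∧ ∀ Q ∈ 𝒬, p Q ∧ ∃ P ∈ 𝒜, Q ⊆ P := by
  choose! f hf hfp using hp
  have hmem : ∀ {Q}, Q ∈ ⋃ P ∈ 𝒜, f P ↔ ∃ P ∈ 𝒜, Q ∈ f P := by simp
  refine ⟨⋃ P ∈ 𝒜, f P, ⟨h.finite.biUnion fun P hP => (hf P hP).finite, ?_, ?_, ?_, ?_⟩, ?_⟩
  · intro Q hQ
    obtain ⟨P, hP, hQP⟩ := hmem.1 hQ
    exact (hf P hP).nonempty Q hQP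
  · intro Q hQ
    obtain ⟨P, hP, hQP⟩ := hmem.1 hQ
    exact (hf P hP).isClopen Q hQP
  · intro Q hQ Q' hQ' hne
    obtain ⟨P, hP, hQP⟩ := hmem.1 hQ
    obtain ⟨P', hP', hQP'⟩ := hmem.1 hQ'
    obtain rfl | hPP := eq_or_ne P P'
    · exact (hf P hP).pairwiseDisjoint hQP hQP' hne
    · exact (h.pairwiseDisjoint hP hP' hPP).mono ((hf P hP).subset_of_mem hQP)
        ((hf P' hP').subset_of_mem hQP')
  · simp_rw [sUnion_iUnion]
    rw [iUnion₂_congr fun P hP => (hf P hP).sUnion_eq, ← sUnion_eq_biUnion, h.sUnion_eq]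
  · intro Q hQ
    obtain ⟨P, hP, hQP⟩ := hmem.1 hQ
    exact ⟨hfp P hP Q hQP, P, hP, (hf P hP).subset_of_mem hQP⟩

end IsClopenPartition

end ClopenPartition

section Cover

variable {X : Type*} [TopologicalSpace X]

theorem exists_isClopenPartition_subordinate_of_finite {𝒰 : Set (Set X)} (hfin : 𝒰.Finite)
    (h𝒰 : ∀ U ∈ 𝒰, IsClopen U) {W : Set X} (hW : IsClopen W) (hW𝒰 : W ⊆ ⋃₀ 𝒰) :
    ∃ 𝒬, IsClopenPartition 𝒬 W ∧ ∀ Q ∈ 𝒬, ∃ U ∈ 𝒰, Q ⊆ U := by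
  induction 𝒰, hfin using Set.Finite.induction_on generalizing W with
  | empty =>
    obtain rfl : W = ∅ := by simpa using hW𝒰
    exact ⟨∅, .empty, by simp⟩
  | @insert U 𝒰 _ _ ih =>
    have hU : IsClopen U := h𝒰 U (mem_insert U 𝒰)
    obtain ⟨𝒬₀, h𝒬₀W, h𝒬₀⟩ := IsClopenPartition.exists_subset_singleton (hW.inter hU)
    obtain ⟨𝒬₁, h𝒬₁, hsub⟩ := ih (fun V hV => h𝒰 V (mem_insert_of_mem U hV)) (hW.diff hU)
      fun x hx => by
        obtain ⟨V, hV, hxV⟩ := hW𝒰 hx.1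
        exact ⟨V, hV.resolve_left fun hVU => hx.2 (hVU ▸ hxV), hxV⟩
    refine ⟨𝒬₀ ∪ 𝒬₁, inter_union_sdiff W U ▸ h𝒬₀.union h𝒬₁ disjoint_sdiff_inter.symm, ?_⟩
    rintro Q (hQ | hQ)
    · exact ⟨U, mem_insert U 𝒰, h𝒬₀W hQ ▸ inter_subset_right⟩
    · obtain ⟨V, hV, hQV⟩ := hsub Q hQ
      exact ⟨V, mem_insert_of_mem U hV, hQV⟩

theorem exists_isClopenPartition_subordinate [CompactSpace X] {𝒰 : Set (Set X)}
    (h𝒰 : ∀ U ∈ 𝒰, IsClopen U) {W : Set X} (hW : IsClopen W) (hW𝒰 : W ⊆ ⋃₀ 𝒰) :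
    ∃ 𝒬, IsClopenPartition 𝒬 W ∧ ∀ Q ∈ 𝒬, ∃ U ∈ 𝒰, Q ⊆ U := by
  rw [sUnion_eq_biUnion] at hW𝒰
  obtain ⟨𝒰', h𝒰'𝒰, hfin, hW𝒰'⟩ :=
    hW.isClosed.isCompact.elim_finite_subcover_image (fun U hU => (h𝒰 U hU).isOpen) hW𝒰
  obtain ⟨𝒬, h𝒬, hsub⟩ := exists_isClopenPartition_subordinate_of_finite hfin
    (fun U hU => h𝒰 U (h𝒰'𝒰 hU)) hW (sUnion_eq_biUnion ▸ hW𝒰')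
  exact ⟨𝒬, h𝒬, fun Q hQ => (hsub Q hQ).imp fun U hU => ⟨h𝒰'𝒰 hU.1, hU.2⟩⟩

theorem exists_isClopen_connectedComponent_subset [CompactSpace X] [T2Space X] {x : X}
    {O : Set X} (hO : IsOpen O) (hxO : connectedComponent x ⊆ O) :
    ∃ U, IsClopen U ∧ connectedComponent x ⊆ U ∧ U ⊆ O := by
  have hdisj : Oᶜ ∩ ⋂ s : {s : Set X // IsClopen s ∧ x ∈ s}, (s : Set X) = ∅ := by
    rw [← connectedComponent_eq_iInter_isClopen, ← disjoint_iff_inter_eq_empty]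
    exact disjoint_compl_left.mono_right hxO
  obtain ⟨t, ht⟩ := hO.isClosed_compl.isCompact.elim_finite_subfamily_closed _
    (fun s => s.2.1.isClosed) hdisj
  refine ⟨⋂ s ∈ t, s, isClopen_biInter_finset fun s _ => s.2.1,
    subset_iInter₂ fun s _ => s.2.1.connectedComponent_subset s.2.2, fun y hy => ?_⟩
  by_contra hyO
  exact (ht.subset ⟨hyO, hy⟩ : y ∈ (∅ : Set X))

theorem SatisfiesStar.exists_diff_interior_subset_pair (hX : SatisfiesStar X) (x : X) :
    ∃ a b : X, connectedComponent x \ interior (connectedComponent x) ⊆ {a, b} := by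
  by_cases hnt : (connectedComponent x).Nontrivial
  · obtain ⟨h, hopen⟩ := hX x hnt
    exact ⟨_, _, fun w hw => by_contra fun hwab =>
      hw.2 (interior_maximal sdiff_subset hopen ⟨hw.1, hwab⟩)⟩
  · have hx : connectedComponent x = {x} :=
      (not_nontrivial_iff.1 hnt).eq_singleton_of_mem mem_connectedComponent
    exact ⟨x, x, sdiff_subset.trans (by simp [hx])⟩

end Cover

section Metric

variable {X : Type*} [MetricSpace X]

theorem Bstar_mono (Y : Set X) {ε δ : ℝ} (h : ε ≤ δ) : Bstar Y ε ⊆ Bstar Y δ :=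
  union_subset_union subset_rfl (thickening_mono h _)

theorem subset_Bstar (Y : Set X) {ε : ℝ} (hε : 0 < ε) : Y ⊆ Bstar Y ε := fun y hy =>
  (em (y ∈ interior Y)).imp id fun h => self_subset_thickening hε _ ⟨hy, h⟩

theorem isOpen_Bstar (Y : Set X) (ε : ℝ) : IsOpen (Bstar Y ε) :=
  isOpen_interior.union isOpen_thickening

theorem exists_mem_BFam [CompactSpace X] {n : ℕ} (hn : 0 < n) (x : X) : ∃ V ∈ BFam X n, x ∈ V := by
  obtain ⟨V, hV, hxV, hVx⟩ := exists_isClopen_connectedComponent_subset (isOpen_Bstar _ _)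
    (subset_Bstar (connectedComponent x) (by positivity : (0 : ℝ) < 1 / n))
  exact ⟨V, ⟨hV, x, hxV, hVx⟩, hxV mem_connectedComponent⟩

theorem exists_isClopenPartition_refining_BFam [CompactSpace X] {n : ℕ} (hn : 0 < n) {W : Set X}
    (hW : IsClopen W) : ∃ 𝒬, IsClopenPartition 𝒬 W ∧ ∀ Q ∈ 𝒬, ∃ U ∈ BFam X n, Q ⊆ U :=
  exists_isClopenPartition_subordinate (fun _ hU => hU.1) hW fun x _ => by
    obtain ⟨V, hV, hxV⟩ := exists_mem_BFam hn x
    exact mem_sUnion_of_mem hxV hV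

theorem exists_isClopenPartition_subset_BFam_of_subset_ball [CompactSpace X] {n : ℕ} {Q : Set X}
    (hQ : IsClopen Q) {z : X} {r : ℝ} (hQz : Q ⊆ ball z r) (hr : 2 * r ≤ 1 / n) :
    ∃ 𝒬, IsClopenPartition 𝒬 Q ∧ 𝒬 ⊆ BFam X n := by
  by_cases hopen : ∀ y ∈ Q, IsOpen (connectedComponent y)
  · obtain ⟨𝒬, h𝒬, hsub⟩ := exists_isClopenPartition_subordinate (𝒰 := connectedComponent '' Q)
      (by rintro _ ⟨y, hy, rfl⟩; exact ⟨isClosed_connectedComponent, hopen y hy⟩) hQ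
      fun y hy => mem_sUnion_of_mem mem_connectedComponent ⟨y, hy, rfl⟩
    refine ⟨𝒬, h𝒬, fun P hP => ?_⟩
    obtain ⟨_, ⟨y, -, rfl⟩, hPy⟩ := hsub P hP
    obtain ⟨p, hp⟩ := h𝒬.nonempty P hP
    rw [connectedComponent_eq (hPy hp)] at hPy
    have hPp : P ⊆ interior (connectedComponent p) := by
      rwa [(hopen p (h𝒬.subset_of_mem hP hp)).interior_eq]
    exact ⟨h𝒬.isClopen P hP, p, (h𝒬.isClopen P hP).connectedComponent_subset hp,
      hPp.trans subset_union_left⟩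
  · push Not at hopen
    obtain ⟨y, hyQ, hy⟩ := hopen
    have hyQ' : connectedComponent y ⊆ Q := hQ.connectedComponent_subset hyQ
    obtain ⟨s, hs⟩ : (connectedComponent y \ interior (connectedComponent y)).Nonempty :=
      sdiff_nonempty.2 fun h => hy (interior_subset.antisymm h ▸ isOpen_interior)
    refine ⟨{Q}, .singleton hQ ⟨y, hyQ⟩, singleton_subset_iff.2
      ⟨hQ, y, hyQ', fun p hp => Or.inr (mem_thickening_iff.2 ⟨s, hs, ?_⟩)⟩⟩
    calc dist p s ≤ dist p z + dist s z := dist_triangle_right _ _ _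
      _ < r + r := add_lt_add (hQz hp) (hQz (hyQ' hs.1))
      _ ≤ 1 / n := by linarith

theorem IsPreconnected.subset_ball_of_subset_ball_union_ball {s : Set X} (hs : IsPreconnected s)
    {a b : X} {δ : ℝ} (hab : s ⊆ ball a δ ∪ ball b δ) {z : X} (hz : z ∈ s) :
    s ⊆ ball z (4 * δ) := by
  intro w hw
  rw [mem_ball]
  rcases hab hw with hwa | hwb <;> rcases hab hz with hza | hzb
  · linarith [dist_triangle_right w z a, mem_ball.1 hwa, mem_ball.1 hza,
      dist_nonneg (x := w) (y := a)]
  · obtain ⟨c, -, hca, hcb⟩ := hs _ _ isOpen_ball isOpen_ball hab ⟨w, hw, hwa⟩ ⟨z, hz, hzb⟩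
    linarith [dist_triangle4 w a c z, dist_triangle c b z, dist_comm a c, dist_comm b z,
      mem_ball.1 hwa, mem_ball.1 hzb, mem_ball.1 hca, mem_ball.1 hcb]
  · obtain ⟨c, -, hca, hcb⟩ := hs _ _ isOpen_ball isOpen_ball hab ⟨z, hz, hza⟩ ⟨w, hw, hwb⟩
    linarith [dist_triangle4 w b c z, dist_triangle c a z, dist_comm b c, dist_comm a z,
      mem_ball.1 hwb, mem_ball.1 hza, mem_ball.1 hca, mem_ball.1 hcb]
  · linarith [dist_triangle_right w z b, mem_ball.1 hwb, mem_ball.1 hzb,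
      dist_nonneg (x := w) (y := b)]

end Metric

section Partition

variable {X : Type*} [MetricSpace X] [CompactSpace X]

theorem exists_isClopenPartition_subset_BFam_of_subset_ball_union_ball {n : ℕ} {P : Set X}
    (hP : IsClopen P) {a b : X} {δ : ℝ} (hPab : P ⊆ ball a δ ∪ ball b δ) (hδ : 8 * δ ≤ 1 / n) :
    ∃ 𝒬, IsClopenPartition 𝒬 P ∧ 𝒬 ⊆ BFam X n := by
  have hcover : P ⊆ ⋃₀ {U | IsClopen U ∧ ∃ z, U ⊆ ball z (4 * δ)} := fun z hz => by
    have hzδ := isPreconnected_connectedComponent.subset_ball_of_subset_ball_union_ball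
      ((hP.connectedComponent_subset hz).trans hPab) (mem_connectedComponent (x := z))
    obtain ⟨U, hU, hzU, hUz⟩ := exists_isClopen_connectedComponent_subset isOpen_ball hzδ
    exact ⟨U, ⟨hU, z, hUz⟩, hzU mem_connectedComponent⟩
  obtain ⟨𝒜, h𝒜, hsub⟩ := exists_isClopenPartition_subordinate (fun _ hU => hU.1) hP hcover
  obtain ⟨𝒬, h𝒬, hB⟩ := h𝒜.exists_refinement (p := (· ∈ BFam X n)) fun Q hQ => by
    obtain ⟨U, ⟨-, z, hUz⟩, hQU⟩ := hsub Q hQ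
    exact exists_isClopenPartition_subset_BFam_of_subset_ball (h𝒜.isClopen Q hQ) (hQU.trans hUz)
      (by linarith)
  exact ⟨𝒬, h𝒬, fun Q hQ => (hB Q hQ).1⟩

theorem SatisfiesStar.exists_isClopenPartition_subset_BFam_of_subset_Bstar (hX : SatisfiesStar X)
    {n : ℕ} {P : Set X} (hP : IsClopen P) {x : X} {δ : ℝ}
    (hPx : P ⊆ Bstar (connectedComponent x) δ) (hδ : 8 * δ ≤ 1 / n) :
    ∃ 𝒬, IsClopenPartition 𝒬 P ∧ 𝒬 ⊆ BFam X n := by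
  by_cases hmeet : (P ∩ connectedComponent x).Nonempty
  · obtain ⟨p, hpP, hpx⟩ := hmeet
    have hxP : connectedComponent x ⊆ P :=
      connectedComponent_eq hpx ▸ hP.connectedComponent_subset hpP
    have hδn : δ ≤ 1 / n := by
      rcases le_or_gt 0 δ with h | h <;> linarith [show (0 : ℝ) ≤ 1 / n by positivity]
    exact ⟨{P}, .singleton hP ⟨p, hpP⟩,
      singleton_subset_iff.2 ⟨hP, x, hxP, hPx.trans (Bstar_mono _ hδn)⟩⟩
  · obtain ⟨a, b, hab⟩ := hX.exists_diff_interior_subset_pair x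
    refine exists_isClopenPartition_subset_BFam_of_subset_ball_union_ball hP (a := a) (b := b)
      (fun p hp => ?_) hδ
    have hpx : p ∉ connectedComponent x := fun h => hmeet ⟨p, hp, h⟩
    rcases hPx hp with hpi | hpt
    · exact absurd (interior_subset hpi) hpx
    · rw [← thickening_singleton, ← thickening_singleton, ← thickening_union, ← insert_eq]
      exact thickening_subset_of_subset δ hab hpt

theorem SatisfiesStar.exists_isClopenPartition_subset_BFam (hX : SatisfiesStar X) {n : ℕ}
    (hn : 0 < n) {W : Set X} (hW : IsClopen W) : ∃ 𝒬, IsClopenPartition 𝒬 W ∧ 𝒬 ⊆ BFam X n := by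
  obtain ⟨𝒜, h𝒜, hsub⟩ := exists_isClopenPartition_refining_BFam (n := 8 * n) (by positivity) hW
  obtain ⟨𝒬, h𝒬, hB⟩ := h𝒜.exists_refinement (p := (· ∈ BFam X n)) fun P hP => by
    obtain ⟨V, ⟨-, x, -, hVx⟩, hPV⟩ := hsub P hP
    refine hX.exists_isClopenPartition_subset_BFam_of_subset_Bstar (h𝒜.isClopen P hP)
      (hPV.trans hVx) (le_of_eq ?_)
    have : (n : ℝ) ≠ 0 := by positivity
    push_cast
    field_simp
  exact ⟨𝒬, h𝒬, fun Q hQ => (hB Q hQ).1⟩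

theorem exists_isClopenPartition_BFam {n : ℕ} (hn : 0 < n) {W : Set X} (hW : IsClopen W) :
    ∃ 𝒬, IsClopenPartition 𝒬 W ∧
      ∀ Q ∈ 𝒬, (∃ U ∈ BFam X n, Q ⊆ U) ∧ (SatisfiesStar X → Q ∈ BFam X n) := by
  by_cases hX : SatisfiesStar X
  · obtain ⟨𝒬, h𝒬, hB⟩ := hX.exists_isClopenPartition_subset_BFam hn hW
    exact ⟨𝒬, h𝒬, fun Q hQ => ⟨⟨Q, hB hQ, subset_rfl⟩, fun _ => hB hQ⟩⟩
  · obtain ⟨𝒬, h𝒬, hB⟩ := exists_isClopenPartition_refining_BFam hn hW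
    exact ⟨𝒬, h𝒬, fun Q hQ => ⟨hB Q hQ, fun h => absurd h hX⟩⟩

end Partition

/-- In a nonempty compact metric space there is a sequence of finite partitions
into nonempty clopen sets, `𝓟ₙ` refining `𝓑ₙ` and `𝓟ₙ₊₁` refining `𝓟ₙ`;
under condition (⋆) one can moreover take `𝓟ₙ ⊆ 𝓑ₙ`. -/
theorem exists_partition_sequence {X : Type*} [MetricSpace X] [CompactSpace X] [Nonempty X] :
    ∃ 𝓟 : ℕ → Set (Set X),
      ∀ n, 1 ≤ n →
        (𝓟 n).Finite ∧
        (∀ W ∈ 𝓟 n, W.Nonempty ∧ IsClopen W) ∧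
        (𝓟 n).PairwiseDisjoint id ∧
        ⋃₀ 𝓟 n = Set.univ ∧
        (∀ W ∈ 𝓟 n, ∃ U ∈ BFam X n, W ⊆ U) ∧
        (∀ W ∈ 𝓟 (n + 1), ∃ U ∈ 𝓟 n, W ⊆ U) ∧
        (SatisfiesStar X → 𝓟 n ⊆ BFam X n) := by
  have step (n : ℕ) (𝒜 : {𝒜 : Set (Set X) // IsClopenPartition 𝒜 univ}) :
      ∃ 𝒬 : {𝒬 : Set (Set X) // IsClopenPartition 𝒬 univ}, ∀ Q ∈ 𝒬.1,
        ((∃ U ∈ BFam X (n + 1), Q ⊆ U) ∧ (SatisfiesStar X → Q ∈ BFam X (n + 1))) ∧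
          ∃ P ∈ 𝒜.1, Q ⊆ P := by
    obtain ⟨𝒬, h𝒬, hQ⟩ := 𝒜.2.exists_refinement fun W hW =>
      exists_isClopenPartition_BFam n.succ_pos (𝒜.2.isClopen W hW)
    exact ⟨⟨𝒬, h𝒬⟩, hQ⟩
  choose next hnext using step
  let 𝓟 (n : ℕ) : {𝒜 : Set (Set X) // IsClopenPartition 𝒜 univ} :=
    Nat.rec ⟨{univ}, .singleton isClopen_univ univ_nonempty⟩ next n
  refine ⟨fun n => (𝓟 n).1, fun n hn => ?_⟩
  obtain ⟨m, rfl⟩ := Nat.exists_eq_add_of_le' hn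
  have h := (𝓟 (m + 1)).2
  exact ⟨h.finite, fun W hW => ⟨h.nonempty W hW, h.isClopen W hW⟩, h.pairwiseDisjoint,
    h.sUnion_eq, fun W hW => (hnext m (𝓟 m) W hW).1.1, fun W hW => (hnext (m + 1) _ W hW).2,
    fun hX W hW => (hnext m (𝓟 m) W hW).1.2 hX⟩
end

section
/- Let (X,d) be a compact metric space and let (𝓟_n)_{n≥1} be a sequence of finite partitions of X into nonempty clopen sets such that each 𝓟_n refines 𝓑_n (every member of 𝓟_n is contained in some member of 𝓑_n) and each 𝓟_{n+1} refines 𝓟_n. If S is a connected component of X and V_n ∈ 𝓟_n satisfies S ⊆ V_n for every n ≥ 1, then S = ⋂_{n≥1} V_n. -/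
/-- Given a sequence of finite partitions of a compact metric space into nonempty
clopen sets, each `𝓟ₙ` refining `𝓑ₙ` and `𝓟ₙ₊₁` refining `𝓟ₙ`, if a component
`S` satisfies `S ⊆ Vₙ ∈ 𝓟ₙ` for all `n ≥ 1`, then `S = ⋂_{n ≥ 1} Vₙ`. -/
theorem component_eq_iInter {X : Type*} [MetricSpace X] [CompactSpace X]
    (𝓟 : ℕ → Set (Set X))
    (hfin : ∀ n, 1 ≤ n → (𝓟 n).Finite)
    (hne : ∀ n, 1 ≤ n → ∀ W ∈ 𝓟 n, W.Nonempty ∧ IsClopen W)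
    (hdisj : ∀ n, 1 ≤ n → (𝓟 n).PairwiseDisjoint id)
    (hcover : ∀ n, 1 ≤ n → ⋃₀ 𝓟 n = Set.univ)
    (href : ∀ n, 1 ≤ n → ∀ W ∈ 𝓟 n, ∃ U ∈ BFam X n, W ⊆ U)
    (hrefP : ∀ n, 1 ≤ n → ∀ W ∈ 𝓟 (n + 1), ∃ U ∈ 𝓟 n, W ⊆ U)
    (x : X) (V : ℕ → Set X)
    (hV : ∀ n, 1 ≤ n → V n ∈ 𝓟 n ∧ connectedComponent x ⊆ V n) :
    connectedComponent x = ⋂ n ∈ {n : ℕ | 1 ≤ n}, V n := by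
  apply Set.Subset.antisymm
  · exact Set.subset_iInter₂ fun n hn => (hV n hn).2
  intro y hy
  simp only [Set.mem_iInter, Set.mem_setOf_eq] at hy
  by_contra hyS
  have hx := connectedComponent_eq_iInter_isClopen x
  rw [hx, Set.mem_iInter] at hyS
  push_neg at hyS
  obtain ⟨⟨C, hCclopen, hxC⟩, hyC⟩ := hyS
  simp only at hyC
  -- δ for C and for Cᶜ
  obtain ⟨δ₁, hδ₁pos, hδ₁⟩ :=
    (hCclopen.isClosed.isCompact).exists_thickening_subset_open hCclopen.isOpen subset_rfl
  obtain ⟨δ₂, hδ₂pos, hδ₂⟩ :=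
    (hCclopen.compl.isClosed.isCompact).exists_thickening_subset_open
      hCclopen.compl.isOpen subset_rfl
  obtain ⟨m, hm⟩ := exists_nat_one_div_lt (lt_min hδ₁pos hδ₂pos)
  set n := m + 1 with hn
  have hn1 : 1 ≤ n := Nat.le_add_left 1 m
  have hlt : (1 : ℝ) / n < min δ₁ δ₂ := by exact_mod_cast hm
  obtain ⟨U, hU, hVU⟩ := href n hn1 (V n) (hV n hn1).1
  obtain ⟨hUclopen, z, hSzU, hUB⟩ := hU
  set S := connectedComponent z
  have hScc : IsPreconnected S := isPreconnected_connectedComponent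
  have key : ∀ (D : Set X) (δ : ℝ), IsClopen D → (1:ℝ)/n < δ → Metric.thickening δ D ⊆ D →
      S ⊆ D → Bstar S (1/n) ⊆ D := by
    intro D δ hD hδlt hδD hSD
    intro w hw
    rcases hw with hw | hw
    · exact hSD (interior_subset hw)
    · apply hδD
      exact Metric.thickening_mono hδlt.le _
        (Metric.thickening_subset_of_subset _ (fun a ha => hSD ha.1) hw)
  by_cases hSC : (S ∩ C).Nonempty
  · have hsub : S ⊆ C := hScc.subset_isClopen hCclopen hSC
    exact hyC (key C δ₁ hCclopen (hlt.trans_le (min_le_left _ _)) hδ₁ hsub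
      (hUB (hVU (hy n hn1))))
  · have hsub : S ⊆ Cᶜ := fun a ha hc => hSC ⟨a, ha, hc⟩
    exact (key Cᶜ δ₂ hCclopen.compl (hlt.trans_le (min_le_right _ _)) hδ₂ hsub
      (hUB (hVU ((hV n hn1).2 mem_connectedComponent)))) hxC
end

section
/- Let X and Y be compact subsets of the real line. There exists an increasing homeomorphism f : ℝ → ℝ with f[X] = Y if and only if there exists an order isomorphism F : 𝓐_X ∪ 𝓑_X → 𝓐_Y ∪ 𝓑_Y such that F[𝓐_X] = 𝓐_Y. -/
/-- An `X`-interval: a connected component of `X` with more than one point. -/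
def IsIntervalOf (X I : Set ℝ) : Prop :=
  (∃ x ∈ X, I = connectedComponentIn X x) ∧ I.Nontrivial

/-- `𝓐_X`: the family of all connected components of `ℝ \ X`
(including the two unbounded ones). -/
def GapsAll (X : Set ℝ) : Set (Set ℝ) :=
  {G | ∃ x ∈ Xᶜ, G = connectedComponentIn Xᶜ x}

/-- `𝓑_X`: the family of all `X`-intervals. -/
def Ivls (X : Set ℝ) : Set (Set ℝ) := {I | IsIntervalOf X I}

/-- The natural order on families of subsets of `ℝ`: `I < J` iff every point
of `I` is below every point of `J`. -/
def SetLT (I J : Set ℝ) : Prop := ∀ x ∈ I, ∀ y ∈ J, x < y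

/-!
The pieces of `X` (components of `ℝ \ X` and nondegenerate components of `X`) are pairwise
disjoint, linearly ordered, and their union is dense; gaps are open intervals and `X`-intervals
are nondegenerate compact intervals. Given `F`, send each piece onto its image by an increasing
bijection (affine for compact intervals, affine after reparametrizing by `arctan` for open ones).
The glued map is strictly increasing on a dense set with dense image, so taking suprema extends it
to an order automorphism of `ℝ`; it maps gaps onto gaps, hence `Xᶜ` onto `Yᶜ`. Conversely, an
increasing homeomorphism maps pieces to pieces, preserving their order and their kind.
-/

open Set Function

theorem isClosed_connectedComponentIn {α : Type*} [TopologicalSpace α] {F : Set α}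
    (hF : IsClosed F) (x : α) : IsClosed (connectedComponentIn F x) := by
  by_cases hx : x ∈ F
  · refine closure_subset_iff_isClosed.1 <| isPreconnected_connectedComponentIn.closure
      |>.subset_connectedComponentIn (subset_closure (mem_connectedComponentIn hx)) ?_
    exact closure_minimal (connectedComponentIn_subset F x) hF
  · rw [connectedComponentIn_eq_empty hx]
    exact isClosed_empty

theorem IsOpen.eq_Ioo_csInf_csSup {α : Type*} [ConditionallyCompleteLinearOrder α]
    [TopologicalSpace α] [OrderTopology α] [DenselyOrdered α] [NoMinOrder α] [NoMaxOrder α]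
    {s : Set α} (ho : IsOpen s) (hc : IsConnected s) (hb : BddBelow s) (ha : BddAbove s) :
    s = Ioo (sInf s) (sSup s) :=
  ((interior_maximal (subset_Icc_csInf_csSup hb ha) ho).trans interior_Icc.subset).antisymm
    (hc.Ioo_csInf_csSup_subset hb ha)

section Extension

variable {α β : Type*} [ConditionallyCompleteLinearOrder α] [TopologicalSpace α]
  [OrderTopology α] [DenselyOrdered α] [NoMinOrder α] [NoMaxOrder α]
  [ConditionallyCompleteLinearOrder β] [TopologicalSpace β] [OrderTopology β] [DenselyOrdered β]
  [NoMinOrder β] [NoMaxOrder β]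

theorem StrictMonoOn.exists_orderIso_eqOn {D : Set α} {f : α → β} (hf : StrictMonoOn f D)
    (hD : Dense D) (hfD : Dense (f '' D)) : ∃ g : α ≃o β, EqOn g f D := by
  set g : α → β := fun x => sSup (f '' (D ∩ Iic x))
  have hne (x : α) : (f '' (D ∩ Iic x)).Nonempty :=
    let ⟨d, hd, hdx⟩ := hD.exists_lt x
    ⟨f d, d, ⟨hd, hdx.le⟩, rfl⟩
  have hbdd (x : α) : BddAbove (f '' (D ∩ Iic x)) := by
    obtain ⟨d, hd, hxd⟩ := hD.exists_gt x
    refine ⟨f d, ?_⟩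
    rintro _ ⟨e, ⟨he, hex⟩, rfl⟩
    exact (hf he hd (hex.trans_lt hxd)).le
  have hle {x d : α} (hd : d ∈ D) (hxd : x ≤ d) : g x ≤ f d := by
    refine csSup_le (hne x) ?_
    rintro _ ⟨e, ⟨he, hex⟩, rfl⟩
    exact hf.monotoneOn he hd (hex.trans hxd)
  have hge {x d : α} (hd : d ∈ D) (hdx : d ≤ x) : f d ≤ g x :=
    le_csSup (hbdd x) ⟨d, ⟨hd, hdx⟩, rfl⟩
  have heq : EqOn g f D := fun d hd => (hle hd le_rfl).antisymm (hge hd le_rfl)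
  have hmono : StrictMono g := fun x y hxy => by
    obtain ⟨d, hd, hxd, hdy⟩ := hD.exists_between hxy
    obtain ⟨d', hd', hdd', hd'y⟩ := hD.exists_between hdy
    calc g x ≤ f d := hle hd hxd.le
      _ < f d' := hf hd hd' hdd'
      _ ≤ g y := hge hd' hd'y.le
  have hrange : Dense (range g) := hfD.mono (heq.image_eq ▸ image_subset_range g D)
  -- a monotone map with dense range is continuous, so its range is a dense interval
  have hsurj : Surjective g := by
    refine range_eq_univ.1 <| (isPreconnected_range
      (hmono.monotone.continuous_of_denseRange hrange)).eq_univ_of_unbounded ?_ ?_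
    · exact not_bddBelow_iff.2 hrange.exists_lt
    · exact not_bddAbove_iff.2 hrange.exists_gt
  exact ⟨hmono.orderIsoOfSurjective g hsurj, heq⟩

end Extension

theorem exists_affine_eq_of_lt {a b c d : ℝ} (hab : a < b) (hcd : c < d) :
    ∃ r > 0, ∃ s : ℝ, r * a + s = c ∧ r * b + s = d := by
  refine ⟨(d - c) / (b - a), div_pos (sub_pos.2 hcd) (sub_pos.2 hab), c - (d - c) / (b - a) * a,
    by ring, ?_⟩
  field_simp [(sub_pos.2 hab).ne']
  ring

theorem exists_strictMono_image_Icc_eq {a b c d : ℝ} (hab : a < b) (hcd : c < d) :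
    ∃ φ : ℝ → ℝ, StrictMono φ ∧ φ '' Icc a b = Icc c d := by
  obtain ⟨r, hr, s, ha, hb⟩ := exists_affine_eq_of_lt hab hcd
  exact ⟨(r * · + s), fun x y h => by simpa using mul_lt_mul_of_pos_left h hr,
    by rw [image_affine_Icc' hr, ha, hb]⟩

theorem exists_strictMono_image_Ioo_eq {a b c d : ℝ} (hab : a < b) (hcd : c < d) :
    ∃ φ : ℝ → ℝ, StrictMono φ ∧ φ '' Ioo a b = Ioo c d := by
  obtain ⟨r, hr, s, ha, hb⟩ := exists_affine_eq_of_lt hab hcd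
  exact ⟨(r * · + s), fun x y h => by simpa using mul_lt_mul_of_pos_left h hr,
    by rw [image_affine_Ioo hr, ha, hb]⟩

open Real in
theorem exists_image_arctan_eq_Ioo {S : Set ℝ} (ho : IsOpen S) (hc : IsConnected S) :
    ∃ A B : ℝ, A < B ∧ arctan '' S = Ioo A B := by
  have hsub : arctan '' S ⊆ Ioo (-(π / 2)) (π / 2) := image_subset_iff.2 fun x _ => arctan_mem_Ioo x
  have heq : arctan '' S = Ioo (-(π / 2)) (π / 2) ∩ tan ⁻¹' S := by
    ext y
    constructor
    · rintro ⟨x, hx, rfl⟩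
      exact ⟨arctan_mem_Ioo x, by simpa [tan_arctan] using hx⟩
    · rintro ⟨hy, hyS⟩
      exact ⟨tan y, hyS, arctan_tan hy.1 hy.2⟩
  have ho' : IsOpen (arctan '' S) := heq ▸ continuousOn_tan_Ioo.isOpen_inter_preimage isOpen_Ioo ho
  have hc' : IsConnected (arctan '' S) := hc.image _ continuous_arctan.continuousOn
  have hI := ho'.eq_Ioo_csInf_csSup hc' (bddBelow_Ioo.mono hsub) (bddAbove_Ioo.mono hsub)
  exact ⟨_, _, nonempty_Ioo.1 (hI ▸ hc'.nonempty), hI⟩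

open Real in
theorem exists_strictMonoOn_image_eq_of_isOpen {S T : Set ℝ} (hSo : IsOpen S)
    (hSc : IsConnected S) (hTo : IsOpen T) (hTc : IsConnected T) :
    ∃ φ : ℝ → ℝ, StrictMonoOn φ S ∧ φ '' S = T := by
  obtain ⟨A, B, hAB, hS⟩ := exists_image_arctan_eq_Ioo hSo hSc
  obtain ⟨C, D, hCD, hT⟩ := exists_image_arctan_eq_Ioo hTo hTc
  obtain ⟨ψ, hψ, hψS⟩ := exists_strictMono_image_Ioo_eq hAB hCD
  have hST : ψ '' (arctan '' S) = arctan '' T := by rw [hS, hψS, hT]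
  refine ⟨tan ∘ ψ ∘ arctan, fun x hx y hy hxy => ?_, ?_⟩
  · have hmem {z : ℝ} (hz : z ∈ S) : ψ (arctan z) ∈ Ioo (-(π / 2)) (π / 2) := by
      obtain ⟨t, -, ht⟩ := hST ▸ mem_image_of_mem ψ (mem_image_of_mem arctan hz)
      exact ht ▸ arctan_mem_Ioo t
    exact strictMonoOn_tan (hmem hx) (hmem hy) (hψ (arctan_strictMono hxy))
  · rw [image_comp, image_comp, hST, ← image_comp]
    simp [tan_arctan]

theorem StrictMono.setLT_image_iff {f : ℝ → ℝ} (hf : StrictMono f) {I J : Set ℝ} :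
    SetLT (f '' I) (f '' J) ↔ SetLT I J := by
  simp only [SetLT, forall_mem_image, hf.lt_iff_lt]

theorem setLT_or_setLT_of_disjoint {I J : Set ℝ} (hI : I.OrdConnected) (hJ : J.OrdConnected)
    (hd : Disjoint I J) : SetLT I J ∨ SetLT J I := by
  by_contra! h
  simp only [SetLT, not_forall, not_lt] at h
  obtain ⟨⟨x, hx, y, hy, hyx⟩, ⟨y', hy', x', hx', hxy'⟩⟩ := h
  rcases le_total x' y with h | h
  · exact disjoint_left.1 hd (hI.out hx' hx ⟨h, hyx⟩) hy
  · exact disjoint_left.1 hd hx' (hJ.out hy hy' ⟨h, hxy'⟩)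

theorem exists_strictMonoOn_iUnion_image_eq {ι : Type*} {S T : ι → Set ℝ}
    (hS : Pairwise fun i j => SetLT (S i) (S j) ∨ SetLT (S j) (S i))
    (hST : ∀ i j, SetLT (S i) (S j) → SetLT (T i) (T j))
    {φ : ι → ℝ → ℝ} (hφ : ∀ i, StrictMonoOn (φ i) (S i)) (hφS : ∀ i, φ i '' S i = T i) :
    ∃ f : ℝ → ℝ, StrictMonoOn f (⋃ i, S i) ∧ ∀ i, f '' S i = T i := by
  classical
  have huniq {i j : ι} {x : ℝ} (hi : x ∈ S i) (hj : x ∈ S j) : i = j := by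
    by_contra hij
    rcases hS hij with h | h
    · exact lt_irrefl x (h x hi x hj)
    · exact lt_irrefl x (h x hj x hi)
  set f : ℝ → ℝ := fun x => if h : ∃ i, x ∈ S i then φ h.choose x else 0
  have hf (i : ι) : EqOn f (φ i) (S i) := fun x hx => by
    have h : ∃ i, x ∈ S i := ⟨i, hx⟩
    simp only [f, dif_pos h, huniq h.choose_spec hx]
  refine ⟨f, ?_, fun i => (hf i).image_eq.trans (hφS i)⟩
  simp only [StrictMonoOn, mem_iUnion]
  rintro x ⟨i, hx⟩ y ⟨j, hy⟩ hxy
  rw [hf i hx, hf j hy]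
  obtain rfl | hij := eq_or_ne i j
  · exact hφ i hx hy hxy
  rcases hS hij with h | h
  · exact hST i j h _ (hφS i ▸ mem_image_of_mem _ hx) _ (hφS j ▸ mem_image_of_mem _ hy)
  · exact absurd (h y hy x hx) hxy.not_gt

section Pieces

variable {X Y G I J : Set ℝ}

theorem isOpen_of_mem_gapsAll (hX : IsClosed X) (hG : G ∈ GapsAll X) : IsOpen G := by
  obtain ⟨x, -, rfl⟩ := hG
  exact hX.isOpen_compl.connectedComponentIn

theorem isConnected_of_mem_gapsAll (hG : G ∈ GapsAll X) : IsConnected G := by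
  obtain ⟨x, hx, rfl⟩ := hG
  exact isConnected_connectedComponentIn_iff.2 hx

theorem subset_compl_of_mem_gapsAll (hG : G ∈ GapsAll X) : G ⊆ Xᶜ := by
  obtain ⟨x, -, rfl⟩ := hG
  exact connectedComponentIn_subset _ _

theorem exists_eq_Icc_of_mem_ivls (hX : IsCompact X) (hI : I ∈ Ivls X) :
    ∃ a b, a < b ∧ I = Icc a b := by
  obtain ⟨⟨x, hx, rfl⟩, hnt⟩ := hI
  have hsub := connectedComponentIn_subset X x
  have hI := eq_Icc_csInf_csSup_of_connected_bdd_closed (isConnected_connectedComponentIn_iff.2 hx)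
    (hX.bddBelow.mono hsub) (hX.bddAbove.mono hsub) (isClosed_connectedComponentIn hX.isClosed x)
  exact ⟨_, _, not_le.1 fun h => (hI ▸ hnt).not_subsingleton (subsingleton_Icc_of_ge h), hI⟩

theorem ordConnected_of_mem_pieces (hI : I ∈ GapsAll X ∪ Ivls X) : I.OrdConnected := by
  rcases hI with ⟨x, -, rfl⟩ | ⟨⟨x, -, rfl⟩, -⟩ <;>
    exact isPreconnected_connectedComponentIn.ordConnected

theorem disjoint_of_mem_pieces (hI : I ∈ GapsAll X ∪ Ivls X) (hJ : J ∈ GapsAll X ∪ Ivls X)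
    (hIJ : I ≠ J) : Disjoint I J := by
  refine disjoint_left.2 fun z hzI hzJ => hIJ ?_
  rcases hI with ⟨x, -, rfl⟩ | ⟨⟨x, -, rfl⟩, -⟩ <;> rcases hJ with ⟨y, -, rfl⟩ | ⟨⟨y, -, rfl⟩, -⟩
  · rw [connectedComponentIn_eq hzI, connectedComponentIn_eq hzJ]
  · exact absurd (connectedComponentIn_subset _ _ hzJ) (connectedComponentIn_subset _ _ hzI)
  · exact absurd (connectedComponentIn_subset _ _ hzI) (connectedComponentIn_subset _ _ hzJ)
  · rw [connectedComponentIn_eq hzI, connectedComponentIn_eq hzJ]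

theorem setLT_or_setLT_of_mem_pieces (hI : I ∈ GapsAll X ∪ Ivls X)
    (hJ : J ∈ GapsAll X ∪ Ivls X) (hIJ : I ≠ J) : SetLT I J ∨ SetLT J I :=
  setLT_or_setLT_of_disjoint (ordConnected_of_mem_pieces hI) (ordConnected_of_mem_pieces hJ)
    (disjoint_of_mem_pieces hI hJ hIJ)

theorem dense_sUnion_pieces (X : Set ℝ) : Dense (⋃₀ (GapsAll X ∪ Ivls X)) := by
  refine dense_of_exists_between fun u v huv => ?_
  by_cases h : Ioo u v ⊆ X
  · obtain ⟨m, hm⟩ := nonempty_Ioo.2 huv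
    have hsub := isPreconnected_Ioo.subset_connectedComponentIn hm h
    exact ⟨m, ⟨_, Or.inr ⟨⟨m, h hm, rfl⟩, (Ioo_infinite huv).nontrivial.mono hsub⟩, hsub hm⟩, hm⟩
  · obtain ⟨z, hz, hzX⟩ := not_subset.1 h
    exact ⟨z, ⟨_, Or.inl ⟨z, hzX, rfl⟩, mem_connectedComponentIn hzX⟩, hz⟩

theorem exists_strictMonoOn_image_eq_of_mem_pieces (hX : IsCompact X) (hY : IsCompact Y)
    (hI : I ∈ GapsAll X ∪ Ivls X) (hJ : J ∈ GapsAll Y ∪ Ivls Y)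
    (hIJ : I ∈ GapsAll X ↔ J ∈ GapsAll Y) : ∃ φ : ℝ → ℝ, StrictMonoOn φ I ∧ φ '' I = J := by
  by_cases hIX : I ∈ GapsAll X
  · have hJY := hIJ.1 hIX
    exact exists_strictMonoOn_image_eq_of_isOpen (isOpen_of_mem_gapsAll hX.isClosed hIX)
      (isConnected_of_mem_gapsAll hIX) (isOpen_of_mem_gapsAll hY.isClosed hJY)
      (isConnected_of_mem_gapsAll hJY)
  · obtain ⟨a, b, hab, rfl⟩ := exists_eq_Icc_of_mem_ivls hX (hI.resolve_left hIX)
    obtain ⟨c, d, hcd, rfl⟩ := exists_eq_Icc_of_mem_ivls hY (hJ.resolve_left (hIJ.not.1 hIX))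
    obtain ⟨φ, hφ, hφI⟩ := exists_strictMono_image_Icc_eq hab hcd
    exact ⟨φ, hφ.strictMonoOn _, hφI⟩

end Pieces

section Transfer

variable {X Y G I : Set ℝ}

theorem image_mem_gapsAll (f : ℝ ≃ₜ ℝ) (hG : G ∈ GapsAll X) : f '' G ∈ GapsAll (f '' X) := by
  obtain ⟨x, hx, rfl⟩ := hG
  have hc : f '' Xᶜ = (f '' X)ᶜ := image_compl_eq f.bijective
  exact ⟨f x, hc ▸ mem_image_of_mem f hx, by rw [f.image_connectedComponentIn hx, hc]⟩

theorem image_mem_ivls (f : ℝ ≃ₜ ℝ) (hI : I ∈ Ivls X) : f '' I ∈ Ivls (f '' X) := by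
  obtain ⟨⟨x, hx, rfl⟩, hnt⟩ := hI
  exact ⟨⟨f x, mem_image_of_mem f hx, f.image_connectedComponentIn hx⟩,
    hnt.image f.injective⟩

theorem image_mem_gapsAll_iff (f : ℝ ≃ₜ ℝ) : f '' G ∈ GapsAll (f '' X) ↔ G ∈ GapsAll X :=
  ⟨fun h => by simpa [image_image] using image_mem_gapsAll f.symm h, image_mem_gapsAll f⟩

theorem image_mem_pieces_iff (f : ℝ ≃ₜ ℝ) :
    f '' I ∈ GapsAll (f '' X) ∪ Ivls (f '' X) ↔ I ∈ GapsAll X ∪ Ivls X :=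
  or_congr (image_mem_gapsAll_iff f)
    ⟨fun h => by simpa [image_image] using image_mem_ivls f.symm h, image_mem_ivls f⟩

theorem exists_orderIso_pieces_of_strictMono (f : ℝ ≃ₜ ℝ) (hf : StrictMono f) :
    ∃ F : ↥(GapsAll X ∪ Ivls X) → ↥(GapsAll (f '' X) ∪ Ivls (f '' X)),
      Bijective F ∧ (∀ I J, SetLT I.val J.val ↔ SetLT (F I).val (F J).val) ∧
      F '' {I | I.val ∈ GapsAll X} = {J | J.val ∈ GapsAll (f '' X)} := by
  set F : ↥(GapsAll X ∪ Ivls X) → ↥(GapsAll (f '' X) ∪ Ivls (f '' X)) :=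
    fun I => ⟨f '' I.1, (image_mem_pieces_iff f).2 I.2⟩
  have hinj : Injective F := fun I J h =>
    Subtype.ext (f.injective.image_injective (congrArg Subtype.val h))
  have hsurj : Surjective F := fun J =>
    ⟨⟨f.symm '' J.1, (image_mem_pieces_iff f).1 ((f.image_symm_image J.1).symm ▸ J.2)⟩,
      Subtype.ext (f.image_symm_image J.1)⟩
  refine ⟨F, ⟨hinj, hsurj⟩, fun I J => hf.setLT_image_iff.symm, ?_⟩
  rw [← image_preimage_eq {J | J.val ∈ GapsAll (f '' X)} hsurj]
  exact congrArg _ (ext fun I => (image_mem_gapsAll_iff f).symm)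

theorem image_compl_eq_of_image_pieces_eq {g : ℝ → ℝ}
    {F : ↥(GapsAll X ∪ Ivls X) → ↥(GapsAll Y ∪ Ivls Y)} (hF : Surjective F)
    (hgap : ∀ I, (F I).1 ∈ GapsAll Y ↔ I.1 ∈ GapsAll X) (hg : ∀ I, g '' I.1 = (F I).1) :
    g '' Xᶜ = Yᶜ := by
  ext y
  constructor
  · rintro ⟨x, hx, rfl⟩
    let I : ↥(GapsAll X ∪ Ivls X) := ⟨_, Or.inl ⟨x, hx, rfl⟩⟩
    exact subset_compl_of_mem_gapsAll ((hgap I).2 ⟨x, hx, rfl⟩)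
      (hg I ▸ mem_image_of_mem g (mem_connectedComponentIn hx))
  · intro hy
    obtain ⟨I, hI⟩ := hF ⟨_, Or.inl ⟨y, hy, rfl⟩⟩
    obtain ⟨x, hx, rfl⟩ : y ∈ g '' I.1 := by rw [hg, hI]; exact mem_connectedComponentIn hy
    exact ⟨x, subset_compl_of_mem_gapsAll ((hgap I).1 (hI ▸ ⟨_, hy, rfl⟩)) hx, rfl⟩

end Transfer

/-- There is an increasing autohomeomorphism of `ℝ` carrying the compact set `X`
onto the compact set `Y` iff there is an order isomorphism
`F : 𝓐_X ∪ 𝓑_X → 𝓐_Y ∪ 𝓑_Y` with `F[𝓐_X] = 𝓐_Y`. -/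
theorem increasing_homeo_iff_order_iso (X Y : Set ℝ)
    (hX : IsCompact X) (hY : IsCompact Y) :
    (∃ f : ℝ ≃ₜ ℝ, StrictMono f ∧ f '' X = Y) ↔
    (∃ F : ↥(GapsAll X ∪ Ivls X) → ↥(GapsAll Y ∪ Ivls Y),
      Function.Bijective F ∧
      (∀ I J : ↥(GapsAll X ∪ Ivls X), SetLT I.val J.val ↔ SetLT (F I).val (F J).val) ∧
      F '' {I : ↥(GapsAll X ∪ Ivls X) | I.val ∈ GapsAll X} =
        {J : ↥(GapsAll Y ∪ Ivls Y) | J.val ∈ GapsAll Y}) := by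
  constructor
  · rintro ⟨f, hf, rfl⟩
    exact exists_orderIso_pieces_of_strictMono f hf
  rintro ⟨F, hF, hFlt, hFgap⟩
  have hgap (I : ↥(GapsAll X ∪ Ivls X)) : (F I).1 ∈ GapsAll Y ↔ I.1 ∈ GapsAll X := by
    have := hF.1.mem_set_image (s := {I : ↥(GapsAll X ∪ Ivls X) | I.1 ∈ GapsAll X}) (a := I)
    rwa [hFgap] at this
  choose φ hφ hφI using fun I : ↥(GapsAll X ∪ Ivls X) =>
    exists_strictMonoOn_image_eq_of_mem_pieces hX hY I.2 (F I).2 (hgap I).symm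
  obtain ⟨f₀, hf₀, hf₀I⟩ := exists_strictMonoOn_iUnion_image_eq (S := Subtype.val)
    (fun I J hIJ => setLT_or_setLT_of_mem_pieces I.2 J.2 (Subtype.coe_injective.ne hIJ))
    (fun I J => (hFlt I J).1) hφ hφI
  have hD : ⋃ I : ↥(GapsAll X ∪ Ivls X), I.1 = ⋃₀ (GapsAll X ∪ Ivls X) := sUnion_eq_iUnion.symm
  have hE : f₀ '' ⋃ I : ↥(GapsAll X ∪ Ivls X), I.1 = ⋃₀ (GapsAll Y ∪ Ivls Y) := by
    rw [image_iUnion, sUnion_eq_iUnion]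
    simp_rw [hf₀I]
    exact hF.2.iUnion_comp fun J => J.1
  obtain ⟨g, hg⟩ :=
    hf₀.exists_orderIso_eqOn (hD ▸ dense_sUnion_pieces X) (hE ▸ dense_sUnion_pieces Y)
  have hgI (I : ↥(GapsAll X ∪ Ivls X)) : g '' I.1 = (F I).1 :=
    (hg.mono (subset_iUnion _ I)).image_eq.trans (hf₀I I)
  refine ⟨g.toHomeomorph, g.strictMono, compl_inj_iff.1 ?_⟩
  rw [g.coe_toHomeomorph, ← image_compl_eq g.bijective]
  exact image_compl_eq_of_image_pieces_eq hF.2 hgap hgI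
end

section
/- Let (X,⊑) be a countably infinite linear order possessing a least element and a greatest element, and let X = A ∪ B where A and B are disjoint, A and B are each dense in X (between any two distinct elements of X there lies an element of A and an element of B), and both the least and the greatest element of X belong to A. Let ℚ ∩ [0,1] = A_ℚ ∪ B_ℚ be a partition such that A_ℚ and B_ℚ are each dense in ℚ ∩ [0,1] and 0, 1 ∈ A_ℚ. Then there exists an order isomorphism F : X → ℚ ∩ [0,1] such that F[A] = A_ℚ. -/
/-!
Back-and-forth with colors. Both orders are colored (points of `A` versus the rest) so that
each color class is dense. Finite partial isomorphisms that preserve colors and fix both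
endpoints can be extended to any prescribed point on either side: a new point lies strictly
between two points of the domain, and density of its color class supplies a partner between
the corresponding images. Enumerating both countable orders, the union of such a chain is a
color-preserving order isomorphism.
-/

def DenseColoring {α κ : Type*} [LT α] (c : α → κ) : Prop :=
  ∀ ⦃x y : α⦄, x < y → ∀ k, ∃ z, c z = k ∧ x < z ∧ z < y

theorem denseColoring_mem_of_disjoint {α : Type*} [LT α] {A B : Set α} (hAB : Disjoint A B)
    (hA : ∀ x y : α, x < y → ∃ a ∈ A, x < a ∧ a < y)
    (hB : ∀ x y : α, x < y → ∃ b ∈ B, x < b ∧ b < y) :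
    DenseColoring (· ∈ A) := by
  intro x y hxy k
  by_cases hk : k
  · obtain ⟨a, ha, hxa, hay⟩ := hA x y hxy
    exact ⟨a, eq_iff_iff.mpr (iff_of_true ha hk), hxa, hay⟩
  · obtain ⟨b, hb, hxb, hby⟩ := hB x y hxy
    exact ⟨b, eq_iff_iff.mpr (iff_of_false (hAB.notMem_of_mem_right hb) hk), hxb, hby⟩

theorem DenseColoring.exists_between_finsets {β κ : Type*} [LinearOrder β] {c : β → κ}
    (hc : DenseColoring c) (k : κ) {lo hi : Finset β} (hlo : lo.Nonempty) (hhi : hi.Nonempty)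
    (h : ∀ x ∈ lo, ∀ y ∈ hi, x < y) :
    ∃ z, c z = k ∧ (∀ x ∈ lo, x < z) ∧ ∀ y ∈ hi, z < y := by
  obtain ⟨z, hz, hmax, hmin⟩ :=
    hc (h _ (lo.max'_mem hlo) _ (hi.min'_mem hhi)) k
  exact ⟨z, hz, fun x hx => (lo.le_max' x hx).trans_lt hmax,
    fun y hy => hmin.trans_le (hi.min'_le y hy)⟩

namespace Order.PartialIso

variable {α β : Type*} [LinearOrder α] [LinearOrder β]

theorem mem_comm {f : PartialIso α β} {p : β × α} : p ∈ f.comm.val ↔ p.swap ∈ f.val := by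
  change p ∈ f.val.image (Equiv.prodComm α β) ↔ _
  rw [← Finset.mem_coe, Finset.coe_image, Equiv.image_eq_preimage_symm]
  rfl

def insert (f : PartialIso α β) (a : α) (b : β)
    (hab : ∀ p ∈ f.val, cmp p.1 a = cmp p.2 b) : PartialIso α β :=
  ⟨Insert.insert (a, b) f.val, by
    intro p hp q hq
    rw [Finset.mem_insert] at hp hq
    rcases hp with rfl | hp <;> rcases hq with rfl | hq
    · simp only [cmp_self_eq_eq]
    · rw [cmp_eq_cmp_symm]
      exact hab q hq
    · exact hab p hp
    · exact f.prop p hp q hq⟩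

theorem le_insert (f : PartialIso α β) (a : α) (b : β)
    (hab : ∀ p ∈ f.val, cmp p.1 a = cmp p.2 b) : f ≤ f.insert a b hab :=
  Finset.subset_insert _ _

theorem mem_insert_self (f : PartialIso α β) (a : α) (b : β)
    (hab : ∀ p ∈ f.val, cmp p.1 a = cmp p.2 b) : (a, b) ∈ (f.insert a b hab).val :=
  Finset.mem_insert_self _ _

theorem exists_orderIso_of_forall_exists_le [Countable α] [Countable β]
    {S : Set (PartialIso α β)} {f₀ : PartialIso α β} (hf₀ : f₀ ∈ S)
    (hleft : ∀ f ∈ S, ∀ a, ∃ g ∈ S, f ≤ g ∧ ∃ b, (a, b) ∈ g.val)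
    (hright : ∀ f ∈ S, ∀ b, ∃ g ∈ S, f ≤ g ∧ ∃ a, (a, b) ∈ g.val) :
    ∃ F : α ≃o β, ∀ a, ∃ f ∈ S, (a, F a) ∈ f.val := by
  cases nonempty_encodable α
  cases nonempty_encodable β
  let definedAt : α ⊕ β → Cofinal S := Sum.elim
    (fun a => ⟨{f | ∃ b, (a, b) ∈ f.val.val}, fun f => by
      obtain ⟨g, hg, hfg, hab⟩ := hleft f f.prop a
      exact ⟨⟨g, hg⟩, hab, hfg⟩⟩)
    (fun b => ⟨{f | ∃ a, (a, b) ∈ f.val.val}, fun f => by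
      obtain ⟨g, hg, hfg, hab⟩ := hright f f.prop b
      exact ⟨⟨g, hg⟩, hab, hfg⟩⟩)
  let I : Ideal S := idealOfCofinals ⟨f₀, hf₀⟩ definedAt
  have hF : ∀ a, ∃ b, ∃ f ∈ I, (a, b) ∈ f.val.val := fun a => by
    obtain ⟨f, ⟨b, hab⟩, hf⟩ := cofinal_meets_idealOfCofinals _ definedAt (Sum.inl a)
    exact ⟨b, f, hf, hab⟩
  have hG : ∀ b, ∃ a, ∃ f ∈ I, (a, b) ∈ f.val.val := fun b => by
    obtain ⟨f, ⟨a, hab⟩, hf⟩ := cofinal_meets_idealOfCofinals _ definedAt (Sum.inr b)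
    exact ⟨a, f, hf, hab⟩
  choose F hF using hF
  choose G hG using hG
  refine ⟨OrderIso.ofCmpEqCmp F G fun a b => ?_, fun a => ?_⟩
  · obtain ⟨f, hf, ha⟩ := hF a
    obtain ⟨g, hg, hb⟩ := hG b
    obtain ⟨h, -, hfh, hgh⟩ := I.directed _ hf _ hg
    exact h.val.prop _ (hfh ha) _ (hgh hb)
  · obtain ⟨f, -, ha⟩ := hF a
    exact ⟨f.val, f.prop, ha⟩

section Colored

variable [BoundedOrder α] [BoundedOrder β] {κ : Type*}

def endpoints [Nontrivial α] [Nontrivial β] : PartialIso α β :=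
  ⟨{(⊥, ⊥), (⊤, ⊤)}, by
    simp only [Finset.mem_insert, Finset.mem_singleton, forall_eq_or_imp, forall_eq,
      cmp_self_eq_eq, (cmp_eq_lt_iff _ _).mpr bot_lt_top, (cmp_eq_gt_iff _ _).mpr bot_lt_top,
      and_self]⟩

/-- Fixing the endpoints puts every new point strictly between two points of the domain, so
density of the colors suffices to extend, without any unboundedness. -/
def colored (cα : α → κ) (cβ : β → κ) : Set (PartialIso α β) :=
  {f | (⊥, ⊥) ∈ f.val ∧ (⊤, ⊤) ∈ f.val ∧ ∀ p ∈ f.val, cβ p.2 = cα p.1}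

variable {cα : α → κ} {cβ : β → κ}

theorem comm_mem_colored {f : PartialIso α β} (hf : f ∈ colored cα cβ) :
    f.comm ∈ colored cβ cα :=
  ⟨mem_comm.mpr hf.1, mem_comm.mpr hf.2.1, fun _ hp => (hf.2.2 _ (mem_comm.mp hp)).symm⟩

theorem exists_across_of_mem_colored (hβ : DenseColoring cβ) {f : PartialIso α β}
    (hf : f ∈ colored cα cβ) (a : α) :
    ∃ b, cβ b = cα a ∧ ∀ p ∈ f.val, cmp p.1 a = cmp p.2 b := by
  by_cases hdom : ∃ b, (a, b) ∈ f.val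
  · obtain ⟨b, hab⟩ := hdom
    exact ⟨b, hf.2.2 _ hab, fun p hp => f.prop p hp _ hab⟩
  simp only [not_exists] at hdom
  have hbot : ⊥ < a := bot_lt_iff_ne_bot.mpr fun h => hdom ⊥ (h ▸ hf.1)
  have htop : a < ⊤ := lt_top_iff_ne_top.mpr fun h => hdom ⊤ (h ▸ hf.2.1)
  let below := (f.val.filter (·.1 < a)).image Prod.snd
  let above := (f.val.filter (a < ·.1)).image Prod.snd
  have hbelow : (⊥ : β) ∈ below :=
    Finset.mem_image.mpr ⟨_, Finset.mem_filter.mpr ⟨hf.1, hbot⟩, rfl⟩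
  have habove : (⊤ : β) ∈ above :=
    Finset.mem_image.mpr ⟨_, Finset.mem_filter.mpr ⟨hf.2.1, htop⟩, rfl⟩
  have hsep : ∀ x ∈ below, ∀ y ∈ above, x < y := by
    simp only [below, above, Finset.mem_image, Finset.mem_filter]
    rintro _ ⟨p, ⟨hp, hpa⟩, rfl⟩ _ ⟨q, ⟨hq, hqa⟩, rfl⟩
    exact (lt_iff_lt_of_cmp_eq_cmp (f.prop p hp q hq)).mp (hpa.trans hqa)
  obtain ⟨b, hb, hbelow_lt, hlt_above⟩ :=
    hβ.exists_between_finsets (cα a) ⟨_, hbelow⟩ ⟨_, habove⟩ hsep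
  refine ⟨b, hb, fun p hp => ?_⟩
  rcases lt_or_gt_of_ne (fun h : p.1 = a => hdom p.2 (h ▸ hp)) with hpa | hap
  · rw [(cmp_eq_lt_iff _ _).mpr hpa, (cmp_eq_lt_iff _ _).mpr
      (hbelow_lt _ (Finset.mem_image_of_mem _ (Finset.mem_filter.mpr ⟨hp, hpa⟩)))]
  · rw [(cmp_eq_gt_iff _ _).mpr hap, (cmp_eq_gt_iff _ _).mpr
      (hlt_above _ (Finset.mem_image_of_mem _ (Finset.mem_filter.mpr ⟨hp, hap⟩)))]

theorem exists_le_mem_colored_left (hβ : DenseColoring cβ) {f : PartialIso α β}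
    (hf : f ∈ colored cα cβ) (a : α) :
    ∃ g ∈ colored cα cβ, f ≤ g ∧ ∃ b, (a, b) ∈ g.val := by
  obtain ⟨b, hb, hab⟩ := exists_across_of_mem_colored hβ hf a
  refine ⟨f.insert a b hab, ⟨?_, ?_, ?_⟩, f.le_insert a b hab, b, f.mem_insert_self a b hab⟩
  · exact f.le_insert a b hab hf.1
  · exact f.le_insert a b hab hf.2.1
  · intro p hp
    rcases Finset.mem_insert.mp hp with rfl | hp
    · exact hb
    · exact hf.2.2 p hp

theorem exists_le_mem_colored_right (hα : DenseColoring cα) {f : PartialIso α β}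
    (hf : f ∈ colored cα cβ) (b : β) :
    ∃ g ∈ colored cα cβ, f ≤ g ∧ ∃ a, (a, b) ∈ g.val := by
  obtain ⟨g, hg, hfg, a, hba⟩ := exists_le_mem_colored_left hα (comm_mem_colored hf) b
  refine ⟨g.comm, comm_mem_colored hg, fun p hp => mem_comm.mpr (hfg (mem_comm.mpr hp)), a,
    mem_comm.mpr hba⟩

theorem endpoints_mem_colored [Nontrivial α] [Nontrivial β] (hbot : cβ ⊥ = cα ⊥)
    (htop : cβ ⊤ = cα ⊤) : endpoints ∈ colored cα cβ := by
  refine ⟨by simp [endpoints], by simp [endpoints], ?_⟩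
  simp [endpoints, hbot, htop]

end Colored

end Order.PartialIso

open Order.PartialIso in
theorem exists_orderIso_of_denseColoring {α β κ : Type*} [LinearOrder α] [LinearOrder β]
    [BoundedOrder α] [BoundedOrder β] [Nontrivial α] [Nontrivial β] [Countable α] [Countable β]
    {cα : α → κ} {cβ : β → κ} (hα : DenseColoring cα) (hβ : DenseColoring cβ)
    (hbot : cβ ⊥ = cα ⊥) (htop : cβ ⊤ = cα ⊤) :
    ∃ F : α ≃o β, ∀ a, cβ (F a) = cα a := by
  obtain ⟨F, hF⟩ := exists_orderIso_of_forall_exists_le (endpoints_mem_colored hbot htop)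
    (fun _ hf => exists_le_mem_colored_left hβ hf)
    (fun _ hf => exists_le_mem_colored_right hα hf)
  refine ⟨F, fun a => ?_⟩
  obtain ⟨f, hf, ha⟩ := hF a
  exact hf.2.2 _ ha

/-- Back-and-forth: a countably infinite linear order with least and greatest
elements, partitioned into two dense sets `A`, `B` with the extremes in `A`,
is isomorphic to `ℚ ∩ [0,1]` by an isomorphism matching `A` with `A_ℚ`. -/
theorem order_iso_rat_Icc_matching {X : Type*} [LinearOrder X] [Countable X] [Infinite X]
    (A B : Set X) (hdisj : Disjoint A B)
    (hAdense : ∀ x y : X, x < y → ∃ a ∈ A, x < a ∧ a < y)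
    (hBdense : ∀ x y : X, x < y → ∃ b ∈ B, x < b ∧ b < y)
    (m : X) (hm : ∀ x : X, m ≤ x) (hmA : m ∈ A)
    (M : X) (hM : ∀ x : X, x ≤ M) (hMA : M ∈ A)
    (AQ BQ : Set ↥(Set.Icc (0:ℚ) 1))
    (hdisjQ : Disjoint AQ BQ)
    (hAQdense : ∀ x y : ↥(Set.Icc (0:ℚ) 1), x < y → ∃ a ∈ AQ, x < a ∧ a < y)
    (hBQdense : ∀ x y : ↥(Set.Icc (0:ℚ) 1), x < y → ∃ b ∈ BQ, x < b ∧ b < y)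
    (h0 : (⟨0, by norm_num⟩ : ↥(Set.Icc (0:ℚ) 1)) ∈ AQ)
    (h1 : (⟨1, by norm_num⟩ : ↥(Set.Icc (0:ℚ) 1)) ∈ AQ) :
    ∃ F : X ≃o ↥(Set.Icc (0:ℚ) 1), ⇑F '' A = AQ := by
  let : BoundedOrder X := { bot := m, bot_le := hm, top := M, le_top := hM }
  have : Nontrivial ↥(Set.Icc (0:ℚ) 1) :=
    ⟨⟨⊥, ⊤, fun h => by simp [Subtype.ext_iff] at h⟩⟩
  obtain ⟨F, hF⟩ := exists_orderIso_of_denseColoring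
    (denseColoring_mem_of_disjoint hdisj hAdense hBdense)
    (denseColoring_mem_of_disjoint hdisjQ hAQdense hBQdense)
    (eq_iff_iff.mpr (iff_of_true h0 hmA)) (eq_iff_iff.mpr (iff_of_true h1 hMA))
  refine ⟨F, ?_⟩
  rw [F.image_eq_preimage_symm]
  ext q
  simpa using (eq_iff_iff.mp (hF (F.symm q))).symm
end

section
/- Let X₀ and X₁ be L-Cantorvals that are homeomorphic. For i ∈ {0,1}, let 𝓩_i be the set of X_i-intervals having no free endpoint, regarded as a subspace of the space 𝓒_{X_i} of connected components of X_i equipped with the topology generated by the sets V* = {C ∈ 𝓒_{X_i} : C ⊆ V} for V clopen in X_i. Then 𝓩_0 and 𝓩_1 are homeomorphic. -/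
/-- An `X`-gap: a bounded connected component of `ℝ \ X`. -/
def IsGapOf (X G : Set ℝ) : Prop :=
  (∃ x ∈ Xᶜ, G = connectedComponentIn Xᶜ x) ∧ Bornology.IsBounded G

/-- An L-Cantorval. -/
def IsLCantorval (X : Set ℝ) : Prop :=
  X.Nonempty ∧ IsCompact X ∧
  ∀ a b : ℝ, a < b → IsGapOf X (Set.Ioo a b) →
    (∃ I : Set ℝ, IsIntervalOf X I ∧ IsLeast I b) ∧
    ∀ ε : ℝ, 0 < ε →
      {I : Set ℝ | IsIntervalOf X I ∧ (I ∩ Set.Ioo (a - ε) a).Nonempty}.Infinite ∧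
      {G : Set ℝ | IsGapOf X G ∧ (G ∩ Set.Ioo (a - ε) a).Nonempty}.Infinite

/-- A free endpoint: `e` lies in the interior of `I` relative to `X`. -/
def FreeEndpoint (X I : Set ℝ) (e : ℝ) : Prop :=
  ∃ U : Set ℝ, IsOpen U ∧ e ∈ U ∧ U ∩ X ⊆ I

/-- The subset of the component space `𝓒_X = ConnectedComponents ↥X`
consisting of the `X`-intervals having no free endpoint. -/
def ZSet (X : Set ℝ) : Set (ConnectedComponents ↥X) :=
  {c | (Subtype.val '' {x : ↥X | ConnectedComponents.mk x = c}).Nontrivial ∧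
    ∀ e : ℝ,
      (IsLeast (Subtype.val '' {x : ↥X | ConnectedComponents.mk x = c}) e ∨
       IsGreatest (Subtype.val '' {x : ↥X | ConnectedComponents.mk x = c}) e) →
      ¬ FreeEndpoint X (Subtype.val '' {x : ↥X | ConnectedComponents.mk x = c}) e}

/-! ### Auxiliary lemmas -/

open Set

/-- The homeomorphism induced on spaces of connected components. -/
def compHomeo {X Y : Type*} [TopologicalSpace X] [TopologicalSpace Y] (f : X ≃ₜ Y) :
    ConnectedComponents X ≃ₜ ConnectedComponents Y where
  toFun := (ConnectedComponents.continuous_coe.comp f.continuous).connectedComponentsLift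
  invFun := (ConnectedComponents.continuous_coe.comp f.symm.continuous).connectedComponentsLift
  left_inv := by
    intro c
    obtain ⟨x, rfl⟩ := ConnectedComponents.surjective_coe c
    simp [Continuous.connectedComponentsLift_apply_coe]
  right_inv := by
    intro c
    obtain ⟨y, rfl⟩ := ConnectedComponents.surjective_coe c
    simp [Continuous.connectedComponentsLift_apply_coe]
  continuous_toFun :=
    (ConnectedComponents.continuous_coe.comp f.continuous).connectedComponentsLift_continuous
  continuous_invFun :=
    (ConnectedComponents.continuous_coe.comp f.symm.continuous).connectedComponentsLift_continuous

@[simp] lemma compHomeo_mk {X Y : Type*} [TopologicalSpace X] [TopologicalSpace Y]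
    (f : X ≃ₜ Y) (x : X) :
    compHomeo f (ConnectedComponents.mk x) = ConnectedComponents.mk (f x) :=
  (ConnectedComponents.continuous_coe.comp f.continuous).connectedComponentsLift_apply_coe x

lemma compHomeo_symm_apply {X Y : Type*} [TopologicalSpace X] [TopologicalSpace Y]
    (f : X ≃ₜ Y) (d : ConnectedComponents Y) :
    compHomeo f (compHomeo f.symm d) = d := by
  obtain ⟨y, rfl⟩ := ConnectedComponents.surjective_coe d
  show compHomeo f (compHomeo f.symm (ConnectedComponents.mk y)) = ConnectedComponents.mk y
  rw [compHomeo_mk, compHomeo_mk, Homeomorph.apply_symm_apply]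

/-- Every compact preconnected nontrivial subset of `ℝ` is a nontrivial closed interval. -/
lemma exists_Icc_eq {S : Set ℝ} (hk : IsCompact S) (hp : IsPreconnected S)
    (hn : S.Nontrivial) : ∃ a b : ℝ, a < b ∧ S = Icc a b := by
  obtain ⟨a, ha⟩ := hk.exists_isLeast hn.nonempty
  obtain ⟨b, hb⟩ := hk.exists_isGreatest hn.nonempty
  have hSI : S = Icc a b := by
    apply Subset.antisymm
    · exact fun x hx => ⟨ha.2 hx, hb.2 hx⟩
    · exact hp.Icc_subset ha.1 hb.1
  refine ⟨a, b, ?_, hSI⟩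
  rcases lt_or_eq_of_le (ha.2 hb.1) with h | h
  · exact h
  · exfalso
    obtain ⟨x, hx, y, hy, hxy⟩ := hn
    have hx' : x = a := le_antisymm (h ▸ hb.2 hx) (ha.2 hx)
    have hy' : y = a := le_antisymm (h ▸ hb.2 hy) (ha.2 hy)
    exact hxy (hx'.trans hy'.symm)

/-- Topological characterization of the endpoints of a compact nontrivial interval. -/
lemma endpoint_iff {S : Set ℝ} (hk : IsCompact S) (hp : IsPreconnected S)
    (hn : S.Nontrivial) (e : ℝ) :
    (IsLeast S e ∨ IsGreatest S e) ↔ e ∈ S ∧ IsPreconnected (S \ {e}) := by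
  obtain ⟨a, b, hab, rfl⟩ := exists_Icc_eq hk hp hn
  constructor
  · rintro (hL | hG)
    · have hea : e = a := hL.unique (isLeast_Icc hab.le)
      subst hea
      refine ⟨hL.1, ?_⟩
      have : Icc e b \ {e} = Ioc e b := by
        ext z
        simp only [mem_diff, mem_Icc, mem_singleton_iff, mem_Ioc]
        constructor
        · rintro ⟨⟨h1, h2⟩, h3⟩; exact ⟨lt_of_le_of_ne h1 (Ne.symm h3), h2⟩
        · rintro ⟨h1, h2⟩; exact ⟨⟨h1.le, h2⟩, h1.ne'⟩
      rw [this]; exact isPreconnected_Ioc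
    · have heb : e = b := hG.unique (isGreatest_Icc hab.le)
      subst heb
      refine ⟨hG.1, ?_⟩
      have : Icc a e \ {e} = Ico a e := by
        ext z
        simp only [mem_diff, mem_Icc, mem_singleton_iff, mem_Ico]
        constructor
        · rintro ⟨⟨h1, h2⟩, h3⟩; exact ⟨h1, lt_of_le_of_ne h2 h3⟩
        · rintro ⟨h1, h2⟩; exact ⟨⟨h1, h2.le⟩, h2.ne⟩
      rw [this]; exact isPreconnected_Ico
  · rintro ⟨heS, hpc⟩
    by_cases hea : e = a
    · refine Or.inl ?_
      rw [hea]
      exact isLeast_Icc hab.le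
    by_cases heb : e = b
    · refine Or.inr ?_
      rw [heb]
      exact isGreatest_Icc hab.le
    exfalso
    have haS : a ∈ Icc a b \ {e} := ⟨left_mem_Icc.2 hab.le, fun h => hea (h.symm ▸ rfl)⟩
    have hbS : b ∈ Icc a b \ {e} := ⟨right_mem_Icc.2 hab.le, fun h => heb (h.symm ▸ rfl)⟩
    have := hpc.Icc_subset haS hbS heS
    exact this.2 rfl

/-- `FreeEndpoint` in terms of the relative interior. -/
lemma freeEndpoint_iff {X S : Set ℝ} (hS : S ⊆ X) {e : ℝ} (he : e ∈ S) :
    FreeEndpoint X S e ↔ (⟨e, hS he⟩ : ↥X) ∈ interior (Subtype.val ⁻¹' S) := by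
  constructor
  · rintro ⟨U, hU, heU, hsub⟩
    rw [mem_interior]
    refine ⟨Subtype.val ⁻¹' U, ?_, hU.preimage continuous_subtype_val, heU⟩
    intro x hx
    exact hsub ⟨hx, x.2⟩
  · intro h
    rw [mem_interior] at h
    obtain ⟨t, hts, hto, het⟩ := h
    obtain ⟨U, hU, rfl⟩ := isOpen_induced_iff.mp hto
    refine ⟨U, hU, het, ?_⟩
    rintro z ⟨hzU, hzX⟩
    exact hts (show (⟨z, hzX⟩ : ↥X) ∈ Subtype.val ⁻¹' U from hzU)

/-- The main transfer lemma: membership in `ZSet` is preserved by the induced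
map on component spaces. -/
lemma mem_ZSet_compHomeo {X₀ X₁ : Set ℝ} (k₀ : IsCompact X₀) (k₁ : IsCompact X₁)
    (f : ↥X₀ ≃ₜ ↥X₁) {c : ConnectedComponents ↥X₀} (hc : c ∈ ZSet X₀) :
    compHomeo f c ∈ ZSet X₁ := by
  haveI : CompactSpace ↥X₀ := isCompact_iff_compactSpace.mp k₀
  haveI : CompactSpace ↥X₁ := isCompact_iff_compactSpace.mp k₁
  set A : Set ↥X₀ := {x | ConnectedComponents.mk x = c} with hA_def
  set B : Set ↥X₁ := {y | ConnectedComponents.mk y = compHomeo f c} with hB_def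
  obtain ⟨x₀, hx₀⟩ := ConnectedComponents.surjective_coe c
  have hA : A = connectedComponent x₀ := by
    ext x
    simp only [hA_def, mem_setOf_eq, ← hx₀]
    exact ConnectedComponents.coe_eq_coe'
  have hB : B = f '' A := by
    ext y
    simp only [hB_def, mem_setOf_eq]
    constructor
    · intro hy
      refine ⟨f.symm y, ?_, f.apply_symm_apply y⟩
      have : compHomeo f (ConnectedComponents.mk (f.symm y)) = ConnectedComponents.mk y := by
        rw [compHomeo_mk, f.apply_symm_apply]
      have h2 : compHomeo f (ConnectedComponents.mk (f.symm y)) = compHomeo f c := by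
        rw [this, hy]
      exact (compHomeo f).injective h2
    · rintro ⟨x, hx, rfl⟩
      simp only [hA_def, mem_setOf_eq] at hx
      rw [← hx, compHomeo_mk]
  -- basic properties
  have hAp : IsPreconnected A := hA ▸ isPreconnected_connectedComponent
  have hAk : IsCompact A := (hA ▸ isClosed_connectedComponent).isCompact
  have hS₀ := hc
  obtain ⟨hS₀n, hS₀free⟩ := hS₀
  have hAn : A.Nontrivial := (Set.image_nontrivial Subtype.val_injective).mp hS₀n
  have hBp : IsPreconnected B := hB ▸ hAp.image _ f.continuous.continuousOn
  have hBk : IsCompact B := hB ▸ hAk.image f.continuous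
  have hBn : B.Nontrivial := hB ▸ hAn.image f.injective
  have hS₀k : IsCompact (Subtype.val '' A) := hAk.image continuous_subtype_val
  have hS₀p : IsPreconnected (Subtype.val '' A) :=
    hAp.image _ continuous_subtype_val.continuousOn
  have hS₁k : IsCompact (Subtype.val '' B) := hBk.image continuous_subtype_val
  have hS₁p : IsPreconnected (Subtype.val '' B) :=
    hBp.image _ continuous_subtype_val.continuousOn
  have hS₁n : (Subtype.val '' B).Nontrivial := hBn.image Subtype.val_injective
  refine ⟨hS₁n, ?_⟩
  intro e' hend
  -- the endpoint as a point of X₁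
  have he'S₁ : e' ∈ Subtype.val '' B := by
    rcases hend with h | h
    · exact h.1
    · exact h.1
  obtain ⟨y, hyB, hye⟩ := he'S₁
  -- corresponding point in X₀
  set x : ↥X₀ := f.symm y with hx_def
  have hxA : x ∈ A := by
    rw [hB] at hyB
    obtain ⟨x', hx', hfx'⟩ := hyB
    have : x = x' := by rw [hx_def, ← hfx', f.symm_apply_apply]
    rwa [this]
  set e : ℝ := (x : ℝ) with he_def
  have heS₀ : e ∈ Subtype.val '' A := mem_image_of_mem _ hxA
  -- S₁ \ {e'} is preconnected
  have h1 : IsPreconnected (Subtype.val '' B \ {e'}) :=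
    ((endpoint_iff hS₁k hS₁p hS₁n e').mp hend).2
  -- transfer to S₀ \ {e}
  have himg₁ : Subtype.val '' B \ {e'} = Subtype.val '' (B \ {y}) := by
    rw [image_diff Subtype.val_injective, image_singleton, hye]
  have h2 : IsPreconnected (B \ {y}) := by
    rw [himg₁] at h1
    exact (Topology.IsInducing.subtypeVal.isPreconnected_image).mp h1
  have himg₂ : B \ {y} = f '' (A \ {x}) := by
    rw [hB, image_diff f.injective, image_singleton, hx_def, f.apply_symm_apply]
  have h3 : IsPreconnected (A \ {x}) := by
    rw [himg₂] at h2
    exact (f.isInducing.isPreconnected_image).mp h2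
  have h4 : IsPreconnected (Subtype.val '' A \ {e}) := by
    have himg₃ : Subtype.val '' A \ {e} = Subtype.val '' (A \ {x}) := by
      rw [image_diff Subtype.val_injective, image_singleton]
    rw [himg₃]
    exact (Topology.IsInducing.subtypeVal.isPreconnected_image).mpr h3
  -- e is an endpoint of S₀
  have hS₀nont : (Subtype.val '' A).Nontrivial := hS₀n
  have hendS₀ : IsLeast (Subtype.val '' A) e ∨ IsGreatest (Subtype.val '' A) e :=
    (endpoint_iff hS₀k hS₀p hS₀nont e).mpr ⟨heS₀, h4⟩
  have hnotfree := hS₀free e hendS₀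
  -- transfer freeness
  intro hfree
  apply hnotfree
  have hS₁X : Subtype.val '' B ⊆ X₁ := by rintro z ⟨w, _, rfl⟩; exact w.2
  have hS₀X : Subtype.val '' A ⊆ X₀ := by rintro z ⟨w, _, rfl⟩; exact w.2
  rw [freeEndpoint_iff hS₁X (by exact ⟨y, hyB, hye⟩)] at hfree
  rw [freeEndpoint_iff hS₀X heS₀]
  have hpreB : (Subtype.val ⁻¹' (Subtype.val '' B) : Set ↥X₁) = B :=
    preimage_image_eq B Subtype.val_injective
  have hpreA : (Subtype.val ⁻¹' (Subtype.val '' A) : Set ↥X₀) = A :=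
    preimage_image_eq A Subtype.val_injective
  rw [hpreB] at hfree
  rw [hpreA]
  have hy_eq : (⟨e', hS₁X ⟨y, hyB, hye⟩⟩ : ↥X₁) = y := Subtype.ext hye.symm
  rw [hy_eq] at hfree
  have hx_eq : (⟨e, hS₀X heS₀⟩ : ↥X₀) = x := Subtype.ext rfl
  rw [hx_eq]
  -- y ∈ interior B → x ∈ interior A
  have hAA : f.symm '' (f '' A) = A := by
    ext z
    constructor
    · rintro ⟨w, ⟨u, hu, rfl⟩, rfl⟩
      simpa using hu
    · intro hz
      exact ⟨f z, ⟨z, hz, rfl⟩, f.symm_apply_apply z⟩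
  have : f.symm y ∈ f.symm '' interior B := mem_image_of_mem _ hfree
  rw [f.symm.image_interior, hB, hAA] at this
  exact this

/-- If two L-Cantorvals are homeomorphic, then the subspaces of their component
spaces consisting of the intervals without free endpoints are homeomorphic. -/
theorem homeomorphic_ZSets (X₀ X₁ : Set ℝ)
    (h₀ : IsLCantorval X₀) (h₁ : IsLCantorval X₁)
    (hhomeo : Nonempty (↥X₀ ≃ₜ ↥X₁)) :
    Nonempty (↥(ZSet X₀) ≃ₜ ↥(ZSet X₁)) := by
  obtain ⟨f⟩ := hhomeo
  obtain ⟨-, k₀, -⟩ := h₀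
  obtain ⟨-, k₁, -⟩ := h₁
  have himg : compHomeo f '' ZSet X₀ = ZSet X₁ := by
    apply Subset.antisymm
    · rintro d ⟨c, hc, rfl⟩
      exact mem_ZSet_compHomeo k₀ k₁ f hc
    · intro d hd
      refine ⟨compHomeo f.symm d, mem_ZSet_compHomeo k₁ k₀ f.symm hd, ?_⟩
      exact compHomeo_symm_apply f d
  exact ⟨((compHomeo f).image (ZSet X₀)).trans (Homeomorph.setCongr himg)⟩
end
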